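/- arXiv:2605.11421 — 6 statements merged into one kernel-verified Lean document; each statement's English description precedes it below -/
import Mathlib

section
/- For every real ρ with ρ ≠ −1 and every integer r ≥ 1, the determinant identity A_{2r−2}(ρ)·A_{2r}(ρ) − A_{2r−1}(ρ)^2 = (ρ^(2r)·(2r+1+2rρ) − 1) / (1+ρ)^2 holds. -/
/-- A_L(ρ) = Σ_{s=0}^{L} (−1)^s (L+1−s) ρ^s. -/
noncomputable def A (L : ℕ) (ρ : ℝ) : ℝ :=
  ∑ s ∈ Finset.range (L + 1), (-1 : ℝ) ^ s * ((L + 1 - s : ℕ) : ℝ) * ρ ^ s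

lemma A_rec (L : ℕ) (ρ : ℝ) : A (L + 1) ρ = (L + 2 : ℝ) - ρ * A L ρ := by
  unfold A
  rw [Finset.sum_range_succ']
  have h : ∀ s ∈ Finset.range (L + 1),
      (-1 : ℝ) ^ (s + 1) * ((L + 1 + 1 - (s + 1) : ℕ) : ℝ) * ρ ^ (s + 1)
        = -(ρ * ((-1 : ℝ) ^ s * ((L + 1 - s : ℕ) : ℝ) * ρ ^ s)) := by
    intro s _
    have : (L + 1 + 1 - (s + 1) : ℕ) = (L + 1 - s : ℕ) := by omega
    rw [this]; ring
  rw [Finset.sum_congr rfl h, Finset.sum_neg_distrib, ← Finset.mul_sum]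
  simp
  ring

lemma A_closed (L : ℕ) (ρ : ℝ) :
    (1 + ρ) ^ 2 * A L ρ = (L + 1 : ℝ) + (L + 2 : ℝ) * ρ + (-ρ) ^ (L + 2) := by
  induction L with
  | zero => simp [A]; ring
  | succ n ih =>
    rw [A_rec]
    push_cast
    linear_combination (-ρ) * ih

theorem stmt_3 (ρ : ℝ) (hρ : ρ ≠ -1) (r : ℕ) (hr : 1 ≤ r) :
    A (2 * r - 2) ρ * A (2 * r) ρ - (A (2 * r - 1) ρ) ^ 2
      = (ρ ^ (2 * r) * (2 * r + 1 + 2 * r * ρ) - 1) / (1 + ρ) ^ 2 := by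
  obtain ⟨k, rfl⟩ : ∃ k, r = k + 1 := ⟨r - 1, by omega⟩
  have h1 : (1 + ρ) ≠ 0 := fun h => hρ (by linarith)
  have e1 : 2 * (k + 1) - 2 = 2 * k := by omega
  have e2 : 2 * (k + 1) - 1 = 2 * k + 1 := by omega
  have e3 : 2 * (k + 1) = 2 * k + 2 := by omega
  rw [e1, e2, e3]
  have c1 := A_closed (2 * k) ρ
  have c2 := A_closed (2 * k + 1) ρ
  have c3 := A_closed (2 * k + 2) ρ
  have p1 : (-ρ) ^ (2 * k + 2) = ρ ^ (2 * k + 2) := Even.neg_pow ⟨k + 1, by ring⟩ ρ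
  have p2 : (-ρ) ^ (2 * k + 1 + 2) = -ρ ^ (2 * k + 3) := by
    have h : 2 * k + 1 + 2 = 2 * k + 3 := by omega
    rw [h]; exact Odd.neg_pow ⟨k + 1, by ring⟩ ρ
  have p3 : (-ρ) ^ (2 * k + 2 + 2) = ρ ^ (2 * k + 4) := by
    have h : 2 * k + 2 + 2 = 2 * k + 4 := by omega
    rw [h]; exact Even.neg_pow ⟨k + 2, by ring⟩ ρ
  rw [p1] at c1; rw [p2] at c2; rw [p3] at c3
  push_cast at c1 c2 c3
  have hA1 : A (2 * k) ρ = ((2 * k + 1 : ℝ) + (2 * k + 2 : ℝ) * ρ + ρ ^ (2 * k + 2)) / (1 + ρ) ^ 2 := by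
    field_simp; linear_combination c1
  have hA2 : A (2 * k + 1) ρ = ((2 * k + 2 : ℝ) + (2 * k + 3 : ℝ) * ρ - ρ ^ (2 * k + 3)) / (1 + ρ) ^ 2 := by
    field_simp; linear_combination c2
  have hA3 : A (2 * k + 2) ρ = ((2 * k + 3 : ℝ) + (2 * k + 4 : ℝ) * ρ + ρ ^ (2 * k + 4)) / (1 + ρ) ^ 2 := by
    field_simp; linear_combination c3
  rw [hA1, hA2, hA3]
  push_cast
  field_simp
  ring
end

section
/- Let N ≥ 3 be an integer and ρ ∈ (1/2, 1) satisfy ρ^(2N)·(2Nρ + 2N + 1) = 1. Setting R = ρ^(2N), one has A_{2N−2}(ρ) = 4N²·R, where A_L(ρ) = Σ_{s=0}^{L} (−1)^s (L+1−s) ρ^s. -/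
lemma geo (x : ℝ) (M : ℕ) :
    (1 + x) * ∑ s ∈ Finset.range (M + 1), (-1 : ℝ) ^ s * x ^ s
      = 1 + (-1 : ℝ) ^ M * x ^ (M + 1) := by
  induction M with
  | zero => simp
  | succ M ih =>
    rw [Finset.sum_range_succ, mul_add, ih]
    ring

lemma A_succ (x : ℝ) (L : ℕ) :
    A (L + 1) x = A L x + ∑ s ∈ Finset.range (L + 2), (-1 : ℝ) ^ s * x ^ s := by
  unfold A
  have h1 : ∑ s ∈ Finset.range (L + 1 + 1), (-1 : ℝ) ^ s * ((L + 1 + 1 - s : ℕ) : ℝ) * x ^ s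
      = ∑ s ∈ Finset.range (L + 2),
          ((-1 : ℝ) ^ s * ((L + 1 - s : ℕ) : ℝ) * x ^ s + (-1 : ℝ) ^ s * x ^ s) := by
    apply Finset.sum_congr rfl
    intro s hs
    have hs' : s ≤ L + 1 := by
      have := Finset.mem_range.mp hs; omega
    have h2 : (L + 1 + 1 - s : ℕ) = (L + 1 - s) + 1 := by omega
    rw [h2]
    push_cast
    ring
  rw [h1, Finset.sum_add_distrib]
  congr 1
  rw [show L + 2 = (L + 1) + 1 from rfl, Finset.sum_range_succ]
  simp

lemma key (x : ℝ) (L : ℕ) :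
    (1 + x) ^ 2 * A L x = ((L : ℝ) + 2) * (1 + x) - 1 + (-1 : ℝ) ^ L * x ^ (L + 2) := by
  induction L with
  | zero => simp [A]; ring
  | succ L ih =>
    have hg := geo x (L + 1)
    have step : (1 + x) ^ 2 * A (L + 1) x
        = (1 + x) ^ 2 * A L x
          + (1 + x) * ((1 + x) * ∑ s ∈ Finset.range (L + 2), (-1 : ℝ) ^ s * x ^ s) := by
      rw [A_succ]; ring
    rw [step, ih, hg]
    push_cast
    ring

theorem stmt_7 (N : ℕ) (hN : 3 ≤ N) (ρ : ℝ) (hρ1 : 1 / 2 < ρ) (hρ2 : ρ < 1)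
    (hroot : ρ ^ (2 * N) * (2 * N * ρ + 2 * N + 1) = 1)
    (R : ℝ) (hR : R = ρ ^ (2 * N)) :
    A (2 * N - 2) ρ = 4 * N ^ 2 * R := by
  have h2 : 2 * N - 2 + 2 = 2 * N := by omega
  have hcast : ((2 * N - 2 : ℕ) : ℝ) = 2 * N - 2 := by
    have : (2 : ℕ) ≤ 2 * N := by omega
    push_cast [this]
    ring
  have heven : Even (2 * N - 2) := ⟨N - 1, by omega⟩
  have hkey := key ρ (2 * N - 2)
  rw [h2, heven.neg_one_pow, hcast, one_mul] at hkey
  have hne : (1 + ρ) ^ 2 ≠ 0 := by positivity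
  have hfin : (1 + ρ) ^ 2 * A (2 * N - 2) ρ = (1 + ρ) ^ 2 * (4 * N ^ 2 * R) := by
    rw [hkey, hR]
    linear_combination (1 - 2 * (N : ℝ) * (1 + ρ)) * hroot
  exact mul_left_cancel₀ hne hfin
end

section
/- For every real ρ and every integer n ≥ 1, the convolution identity Σ_{s=0}^{n} γ_s · A_{2(n−s)}(ρ) = 0 holds, where γ₀ = −1, γ₁ = ρ²−2ρ+3, γ₂ = (ρ−2)(2ρ²−3ρ+2), γ_s = 4(1−ρ)⁴(2ρ−1)^(s−3) for s ≥ 3, and A_L(ρ) = Σ_{s=0}^{L} (−1)^s (L+1−s) ρ^s. -/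
open Finset

lemma A_zero (ρ : ℝ) : A 0 ρ = 1 := by simp [A]

lemma A_add_two (L : ℕ) (ρ : ℝ) :
    A (L + 2) ρ = ρ ^ 2 * A L ρ + ((L : ℝ) + 3) - ((L : ℝ) + 2) * ρ := by
  have hshift : ∀ s ∈ range (L + 1),
      (-1 : ℝ) ^ (s + 1 + 1) * ((L + 2 + 1 - (s + 1 + 1) : ℕ) : ℝ) * ρ ^ (s + 1 + 1)
        = ρ ^ 2 * ((-1 : ℝ) ^ s * ((L + 1 - s : ℕ) : ℝ) * ρ ^ s) := by
    intro s _
    rw [show L + 2 + 1 - (s + 1 + 1) = L + 1 - s by omega]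
    ring
  rw [A, sum_range_succ', sum_range_succ', sum_congr rfl hshift, ← mul_sum, ← A,
    show L + 2 + 1 - (0 + 1) = L + 2 by omega]
  push_cast
  ring

lemma A_two_mul_succ (m : ℕ) (ρ : ℝ) :
    A (2 * (m + 1)) ρ = ρ ^ 2 * A (2 * m) ρ + ((2 * m + 3) - (2 * m + 2) * ρ) := by
  rw [show 2 * (m + 1) = 2 * m + 2 by ring, A_add_two]
  push_cast
  ring

lemma sum_antidiagonal_succ_mul_of_rec {γ B c : ℕ → ℝ} {r : ℝ}
    (hB : ∀ m, B (m + 1) = r * B m + c m) (n : ℕ) :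
    ∑ p ∈ antidiagonal (n + 1), γ p.1 * B p.2 =
      r * ∑ p ∈ antidiagonal n, γ p.1 * B p.2 + ∑ p ∈ antidiagonal n, γ p.1 * c p.2
        + γ (n + 1) * B 0 := by
  simp only [Nat.sum_antidiagonal_succ', hB, mul_sum, ← sum_add_distrib]
  rw [add_comm]
  congr 1
  exact sum_congr rfl fun p _ => by ring

section Gamma

variable {ρ : ℝ} {γ : ℕ → ℝ}
  (hγ0 : γ 0 = -1)
  (hγ1 : γ 1 = ρ ^ 2 - 2 * ρ + 3)
  (hγ2 : γ 2 = (ρ - 2) * (2 * ρ ^ 2 - 3 * ρ + 2))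
  (hγ : ∀ s, 3 ≤ s → γ s = 4 * (1 - ρ) ^ 4 * (2 * ρ - 1) ^ (s - 3))
include hγ0 hγ1 hγ2 hγ

lemma sum_range_add_three_gamma (m : ℕ) :
    ∑ s ∈ range (m + 3), γ s = 2 * (ρ - 1) ^ 3 * (2 * ρ - 1) ^ m := by
  induction m with
  | zero =>
    simp only [sum_range_succ, sum_range_zero, hγ0, hγ1, hγ2]
    ring
  | succ k ih =>
    rw [show k + 1 + 3 = k + 3 + 1 by ring, sum_range_succ, ih, hγ _ (by omega),
      Nat.add_sub_cancel]
    ring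

lemma sum_antidiagonal_gamma_mul_linear_add_gamma_succ (n : ℕ) (hn : 1 ≤ n) :
    ∑ p ∈ antidiagonal n, γ p.1 * ((2 * p.2 + 3) - (2 * p.2 + 2) * ρ) + γ (n + 1) = 0 := by
  induction n, hn using Nat.le_induction with
  | base =>
    simp only [Nat.sum_antidiagonal_succ, Nat.antidiagonal_zero, sum_singleton, zero_add, hγ0,
      hγ1, hγ2]
    push_cast
    ring
  | succ n hn ih =>
    obtain ⟨m, rfl⟩ : ∃ m, n = m + 1 := ⟨n - 1, by omega⟩
    have hc : ∀ j : ℕ, (2 * ((j + 1 : ℕ) : ℝ) + 3) - (2 * ((j + 1 : ℕ) : ℝ) + 2) * ρ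
        = 1 * ((2 * j + 3) - (2 * j + 2) * ρ) + 2 * (1 - ρ) := by
      intro j; push_cast; ring
    have hsum : ∑ s ∈ range (m + 2), γ s + γ (m + 2)
        = 2 * (ρ - 1) ^ 3 * (2 * ρ - 1) ^ m := by
      rw [← sum_range_succ]
      exact sum_range_add_three_gamma hγ0 hγ1 hγ2 hγ m
    rw [sum_antidiagonal_succ_mul_of_rec
      (B := fun j : ℕ => (2 * (j : ℝ) + 3) - (2 * j + 2) * ρ) (c := fun _ => 2 * (1 - ρ)) hc,
      ← sum_mul, Nat.sum_antidiagonal_eq_sum_range_succ (fun i _ => γ i),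
      hγ (m + 1 + 1 + 1) (by omega),
      show m + 1 + 1 + 1 - 3 = m by omega]
    simp only [Nat.cast_zero, one_mul] at ih ⊢
    linear_combination ih + 2 * (1 - ρ) * hsum

end Gamma

theorem stmt_13 (ρ : ℝ) (γ : ℕ → ℝ)
    (hγ0 : γ 0 = -1)
    (hγ1 : γ 1 = ρ ^ 2 - 2 * ρ + 3)
    (hγ2 : γ 2 = (ρ - 2) * (2 * ρ ^ 2 - 3 * ρ + 2))
    (hγ : ∀ s, 3 ≤ s → γ s = 4 * (1 - ρ) ^ 4 * (2 * ρ - 1) ^ (s - 3))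
    (n : ℕ) (hn : 1 ≤ n) :
    ∑ s ∈ Finset.range (n + 1), γ s * A (2 * (n - s)) ρ = 0 := by
  rw [← Nat.sum_antidiagonal_eq_sum_range_succ (fun i j => γ i * A (2 * j) ρ)]
  induction n, hn using Nat.le_induction with
  | base =>
    simp only [Nat.sum_antidiagonal_succ, Nat.antidiagonal_zero, sum_singleton, zero_add,
      mul_zero, hγ0, hγ1, A_zero, A_add_two 0 ρ]
    push_cast
    ring
  | succ n hn ih =>
    rw [sum_antidiagonal_succ_mul_of_rec (B := fun j => A (2 * j) ρ)
      (fun m => A_two_mul_succ m ρ), ih, A_zero,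
      mul_zero, zero_add, mul_one]
    exact sum_antidiagonal_gamma_mul_linear_add_gamma_succ hγ0 hγ1 hγ2 hγ n hn
end

section
/- Let N ≥ 1 be an integer, α ≥ 0, and δ = 1/(2Nα+1). Define the Huber function H_δ(x) = x²/2 for |x| ≤ δ and H_δ(x) = δ|x| − δ²/2 for |x| ≥ δ. Then H_δ is convex, differentiable, and 1-smooth (its derivative is 1-Lipschitz); and starting from x₀ = 1, the gradient-descent iterates x_{k+1} = x_k − α·H_δ'(x_k) satisfy x_k = 1 − kαδ ≥ δ for all 0 ≤ k ≤ N, and H_δ(x_N) − H_δ(0) = 1/(2(2Nα+1)). -/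
theorem stmt_16 (N : ℕ) (hN : 1 ≤ N) (α : ℝ) (hα : 0 ≤ α)
    (δ : ℝ) (hδ : δ = 1 / (2 * N * α + 1))
    (H : ℝ → ℝ)
    (hH : H = fun x : ℝ => if |x| ≤ δ then x ^ 2 / 2 else δ * |x| - δ ^ 2 / 2)
    (x : ℕ → ℝ) (hx0 : x 0 = 1)
    (hstep : ∀ k, x (k + 1) = x k - α * deriv H (x k)) :
    ConvexOn ℝ Set.univ H ∧ Differentiable ℝ H ∧ LipschitzWith 1 (deriv H) ∧
    (∀ k ≤ N, x k = 1 - k * α * δ ∧ δ ≤ x k) ∧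
    H (x N) - H 0 = 1 / (2 * (2 * N * α + 1)) := by
  have hs : (0:ℝ) < 2 * N * α + 1 := by positivity
  have hδ0 : 0 < δ := by rw [hδ]; positivity
  set g : ℝ → ℝ := fun t => max (-δ) (min t δ) with hg
  -- piecewise formulas
  have hHq : ∀ t : ℝ, |t| ≤ δ → H t = t ^ 2 / 2 := by
    intro t ht; rw [hH]; dsimp only; rw [if_pos ht]
  have hHr : ∀ t : ℝ, δ ≤ t → H t = δ * t - δ ^ 2 / 2 := by
    intro t ht; rw [hH]; dsimp only
    by_cases h2 : |t| ≤ δ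
    · have h3 : t = δ := le_antisymm ((le_abs_self t).trans h2) ht
      rw [if_pos h2, h3]; ring
    · have ht0 : 0 ≤ t := le_trans hδ0.le ht
      rw [if_neg h2, abs_of_nonneg ht0]
  have hHl : ∀ t : ℝ, t ≤ -δ → H t = -(δ * t) - δ ^ 2 / 2 := by
    intro t ht; rw [hH]; dsimp only
    by_cases h2 : |t| ≤ δ
    · have h3 : -δ ≤ t := neg_le_of_abs_le h2
      have h4 : t = -δ := le_antisymm ht h3
      rw [if_pos h2, h4]; ring
    · have ht0 : t ≤ 0 := le_trans ht (by linarith)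
      rw [if_neg h2, abs_of_nonpos ht0]; ring
  have hq : ∀ z : ℝ, HasDerivAt (fun t : ℝ => t ^ 2 / 2) z z := by
    intro z
    have := (hasDerivAt_pow 2 z).div_const 2
    simpa using this
  have hlin : ∀ z : ℝ, HasDerivAt (fun t : ℝ => δ * t - δ ^ 2 / 2) δ z := by
    intro z
    simpa using ((hasDerivAt_id z).const_mul δ).sub_const (δ ^ 2 / 2)
  have hlin' : ∀ z : ℝ, HasDerivAt (fun t : ℝ => -(δ * t) - δ ^ 2 / 2) (-δ) z := by
    intro z
    simpa using (((hasDerivAt_id z).const_mul δ).neg).sub_const (δ ^ 2 / 2)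
  -- main derivative lemma
  have key : ∀ y : ℝ, HasDerivAt H (g y) y := by
    intro y
    rcases lt_trichotomy y (-δ) with hy | hy | hy
    · -- y < -δ
      have hg' : g y = -δ := by
        have : min y δ = y := min_eq_left (by linarith)
        simp [hg, this, max_eq_left (by linarith : y ≤ -δ)]
      rw [hg']
      have hev : H =ᶠ[nhds y] fun t : ℝ => -(δ * t) - δ ^ 2 / 2 := by
        filter_upwards [eventually_lt_nhds hy] with t ht
        exact hHl t ht.le
      exact (hlin' y).congr_of_eventuallyEq hev
    · -- y = -δ
      rw [hy]
      have hg' : g (-δ) = -δ := by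
        simp [hg, min_eq_left (by linarith : -δ ≤ δ)]
      rw [hg']
      have h1 : HasDerivWithinAt H (-δ) (Set.Iic (-δ)) (-δ) :=
        ((hlin' (-δ)).hasDerivWithinAt).congr (fun t ht => hHl t ht)
          (hHl _ le_rfl)
      have h2 : HasDerivWithinAt H (-δ) (Set.Icc (-δ) δ) (-δ) := by
        have := (hq (-δ)).hasDerivWithinAt (s := Set.Icc (-δ) δ)
        exact this.congr (fun t ht => hHq t (abs_le.mpr ⟨ht.1, ht.2⟩))
          (hHq _ (by rw [abs_neg, abs_of_pos hδ0]))
      have h3 := h1.union h2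
      rw [Set.Iic_union_Icc_eq_Iic (by linarith : -δ ≤ δ)] at h3
      exact h3.hasDerivAt (Iic_mem_nhds (by linarith))
    · rcases lt_trichotomy y δ with hy2 | hy2 | hy2
      · -- -δ < y < δ
        have hg' : g y = y := by
          simp [hg, min_eq_left hy2.le, max_eq_right (le_of_lt hy)]
        rw [hg']
        have hev : H =ᶠ[nhds y] fun t : ℝ => t ^ 2 / 2 := by
          have habs : |y| < δ := abs_lt.mpr ⟨hy, hy2⟩
          have : ∀ᶠ t in nhds y, |t| < δ :=
            (continuous_abs.continuousAt (x := y)).eventually_lt continuousAt_const habs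
          filter_upwards [this] with t ht
          exact hHq t ht.le
        exact (hq y).congr_of_eventuallyEq hev
      · -- y = δ
        rw [hy2]
        have hg' : g δ = δ := by
          simp [hg, max_eq_right (by linarith : -δ ≤ δ)]
        rw [hg']
        have h1 : HasDerivWithinAt H δ (Set.Icc (-δ) δ) δ := by
          have := (hq δ).hasDerivWithinAt (s := Set.Icc (-δ) δ)
          exact this.congr (fun t ht => hHq t (abs_le.mpr ⟨ht.1, ht.2⟩))
            (hHq _ (by rw [abs_of_pos hδ0]))
        have h2 : HasDerivWithinAt H δ (Set.Ici δ) δ :=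
          ((hlin δ).hasDerivWithinAt).congr (fun t ht => hHr t ht) (hHr _ le_rfl)
        have h3 := h1.union h2
        rw [Set.Icc_union_Ici_eq_Ici (by linarith : -δ ≤ δ)] at h3
        exact h3.hasDerivAt (Ici_mem_nhds (by linarith))
      · -- y > δ
        have hg' : g y = δ := by
          simp [hg, min_eq_right hy2.le, max_eq_right (by linarith : -δ ≤ δ)]
        rw [hg']
        have hev : H =ᶠ[nhds y] fun t : ℝ => δ * t - δ ^ 2 / 2 := by
          filter_upwards [eventually_gt_nhds hy2] with t ht
          exact hHr t ht.le
        exact (hlin y).congr_of_eventuallyEq hev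
  have hdiff : Differentiable ℝ H := fun y => (key y).differentiableAt
  have hderiv : deriv H = g := funext fun y => (key y).deriv
  have hgmono : Monotone g := fun a b hab =>
    max_le_max le_rfl (min_le_min hab le_rfl)
  have hlip : LipschitzWith 1 (deriv H) := by
    rw [hderiv]
    refine LipschitzWith.of_dist_le_mul fun a b => ?_
    rw [Real.dist_eq, Real.dist_eq]
    have h1 : |g a - g b| ≤ max |(-δ) - (-δ)| |min a δ - min b δ| :=
      abs_max_sub_max_le_max _ _ _ _
    have h2 : |min a δ - min b δ| ≤ max |a - b| |δ - δ| :=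
      abs_min_sub_min_le_max _ _ _ _
    simp only [sub_self, abs_zero] at h1 h2
    rw [max_eq_right (abs_nonneg _)] at h1
    rw [max_eq_left (abs_nonneg _)] at h2
    calc |g a - g b| ≤ |min a δ - min b δ| := h1
      _ ≤ |a - b| := h2
      _ = 1 * |a - b| := (one_mul _).symm
  have hconvex : ConvexOn ℝ Set.univ H := by
    refine Monotone.convexOn_univ_of_deriv hdiff ?_
    rw [hderiv]; exact hgmono
  -- iterates
  have hδ1 : δ * (2 * N * α + 1) = 1 := by rw [hδ]; field_simp
  have hlow : ∀ k : ℕ, k ≤ N → δ ≤ 1 - k * α * δ := by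
    intro k hk
    have hk' : (k : ℝ) ≤ N := Nat.cast_le.mpr hk
    have h1 : (k : ℝ) * α * δ ≤ 2 * N * α * δ := by
      have h2 : (k : ℝ) * α ≤ 2 * N * α :=
        mul_le_mul_of_nonneg_right (by linarith [Nat.cast_nonneg (α := ℝ) N]) hα
      exact mul_le_mul_of_nonneg_right h2 hδ0.le
    nlinarith [hδ1, h1]
  have hiter : ∀ k ≤ N, x k = 1 - k * α * δ ∧ δ ≤ x k := by
    intro k
    induction k with
    | zero => intro _; constructor
              · simp [hx0]
              · rw [hx0]; simpa using hlow 0 (Nat.zero_le N)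
    | succ n ih =>
        intro hn
        have hn' : n ≤ N := Nat.le_of_succ_le hn
        obtain ⟨hxn, hxnδ⟩ := ih hn'
        have hgrad : deriv H (x n) = δ := by
          rw [hderiv, hg]
          simp [min_eq_right hxnδ, max_eq_right (by linarith : -δ ≤ δ)]
        have hx1 : x (n + 1) = 1 - (n + 1 : ℕ) * α * δ := by
          rw [hstep n, hgrad, hxn]; push_cast; ring
        exact ⟨hx1, hx1 ▸ hlow (n + 1) hn⟩
  refine ⟨hconvex, hdiff, hlip, hiter, ?_⟩
  obtain ⟨hxN, hxNδ⟩ := hiter N le_rfl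
  rw [hHr (x N) hxNδ, hHq 0 (by simpa using hδ0.le), hxN, hδ]
  field_simp
  ring
end

section
/- Let N ≥ 3 be an integer and ρ_N ∈ (0,1) the root of ρ^(2N)(2Nρ + 2N + 1) = 1; set α⋆ = 1 + ρ_N. Then (α⋆ − 1)^(2N)/2 = 1/(2(2Nα⋆ + 1)) = ρ_N^(2N)/2, and for every α ≥ 0, max{ (1−α)^(2N)/2 , 1/(2(2Nα+1)) } ≥ ρ_N^(2N)/2, with equality if and only if α = α⋆. -/
theorem stmt_17 (N : ℕ) (hN : 3 ≤ N) (ρ : ℝ) (hρ0 : 0 < ρ) (hρ1 : ρ < 1)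
    (hroot : ρ ^ (2 * N) * (2 * N * ρ + 2 * N + 1) = 1)
    (αstar : ℝ) (hα : αstar = 1 + ρ) :
    (αstar - 1) ^ (2 * N) / 2 = 1 / (2 * (2 * N * αstar + 1)) ∧
    (αstar - 1) ^ (2 * N) / 2 = ρ ^ (2 * N) / 2 ∧
    (∀ α : ℝ, 0 ≤ α →
      ρ ^ (2 * N) / 2 ≤ max ((1 - α) ^ (2 * N) / 2) (1 / (2 * (2 * N * α + 1)))) ∧
    (∀ α : ℝ, 0 ≤ α →
      (max ((1 - α) ^ (2 * N) / 2) (1 / (2 * (2 * N * α + 1))) = ρ ^ (2 * N) / 2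
        ↔ α = αstar)) := by
  have hNpos : (0 : ℝ) < (N : ℝ) := by positivity
  have hApos : (0 : ℝ) < 2 * N * ρ + 2 * N + 1 := by positivity
  have hval : ρ ^ (2 * N) = 1 / (2 * N * ρ + 2 * N + 1) := by
    field_simp
    linarith [hroot]
  have hsub : αstar - 1 = ρ := by rw [hα]; ring
  have hkey : (αstar - 1) ^ (2 * N) / 2 = 1 / (2 * (2 * N * αstar + 1)) := by
    have hAne : (2 * (N:ℝ) * ρ + 2 * N + 1) ≠ 0 := ne_of_gt hApos
    rw [hsub, hval, hα]
    rw [div_eq_div_iff (by positivity) (by positivity)]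
    field_simp
    ring
  have hkey2 : (αstar - 1) ^ (2 * N) / 2 = ρ ^ (2 * N) / 2 := by rw [hsub]
  -- huber term at αstar equals ρ^(2N)/2
  have hhub : 1 / (2 * (2 * N * αstar + 1)) = ρ ^ (2 * N) / 2 := by
    rw [← hkey, hsub]
  have hden : ∀ α : ℝ, 0 ≤ α → (0 : ℝ) < 2 * N * α + 1 := by
    intro α hα0; positivity
  -- lower bound
  have hlb : ∀ α : ℝ, 0 ≤ α →
      ρ ^ (2 * N) / 2 ≤ max ((1 - α) ^ (2 * N) / 2) (1 / (2 * (2 * N * α + 1))) := by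
    intro α hα0
    rcases le_or_gt αstar α with h | h
    · refine le_max_of_le_left ?_
      have h1 : ρ ≤ α - 1 := by rw [hα] at h; linarith
      have : ρ ^ (2 * N) ≤ (α - 1) ^ (2 * N) :=
        pow_le_pow_left₀ hρ0.le h1 _
      have heven : (α - 1) ^ (2 * N) = (1 - α) ^ (2 * N) := by
        rw [show (1 - α) = -(α - 1) by ring, neg_pow, pow_mul]
        simp [pow_mul]
      linarith
    · refine le_max_of_le_right ?_
      rw [← hhub]
      have h1 : 2 * N * α + 1 ≤ 2 * N * αstar + 1 := by nlinarith
      have h2 : (0 : ℝ) < 2 * (2 * N * α + 1) := by linarith [hden α hα0]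
      have h3 : (0 : ℝ) < 2 * (2 * N * αstar + 1) := by nlinarith [hden α hα0]
      exact one_div_le_one_div_of_le h2 (by linarith)
  refine ⟨hkey, hkey2, hlb, ?_⟩
  intro α hα0
  constructor
  · intro hmax
    by_contra hne
    rcases lt_or_gt_of_ne hne with h | h
    · -- α < αstar : huber term strictly bigger
      have h1 : 2 * N * α + 1 < 2 * N * αstar + 1 := by nlinarith
      have h2 : (0 : ℝ) < 2 * (2 * N * α + 1) := by linarith [hden α hα0]
      have hstrict : ρ ^ (2 * N) / 2 < 1 / (2 * (2 * N * α + 1)) := by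
        rw [← hhub]
        apply one_div_lt_one_div_of_lt h2
        linarith
      have := le_max_right ((1 - α) ^ (2 * N) / 2) (1 / (2 * (2 * N * α + 1)))
      rw [hmax] at this
      linarith
    · -- α > αstar : quadratic term strictly bigger
      have h1 : ρ < α - 1 := by rw [hα] at h; linarith
      have hstrict : ρ ^ (2 * N) < (α - 1) ^ (2 * N) := by
        apply pow_lt_pow_left₀ h1 hρ0.le
        positivity
      have heven : (α - 1) ^ (2 * N) = (1 - α) ^ (2 * N) := by
        rw [show (1 - α) = -(α - 1) by ring, neg_pow]
        simp
      have := le_max_left ((1 - α) ^ (2 * N) / 2) (1 / (2 * (2 * N * α + 1)))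
      rw [hmax] at this
      rw [heven] at hstrict
      linarith
  · intro heq
    rw [heq]
    have h1 : (1 - αstar) ^ (2 * N) = ρ ^ (2 * N) := by
      rw [show (1 - αstar) = -(αstar - 1) by ring, neg_pow, hsub]
      simp
    rw [h1, hhub, max_self]
end

section
/- Let N ≥ 3 be an integer and ρ ∈ (1/2, 1) satisfy ρ^(2N)(2Nρ + 2N + 1) = 1. Set q = ρ^N and define Ψ_N(ρ) = 2Σ_{m=0}^{2N−1}(−ρ)^m − (2N−3)ρ^(2N) − ρ^(2N+1)Σ_{m=0}^{2N−4}(−ρ)^m, and L₀ = q²(N−1) + (q²−1)/(1+ρ) + q. Then for every vector d ∈ ℝ^(N−1) with all d_i ≥ 0, the quantity L_N(d) = q²(Σ_{j=0}^{N−2}(N−1−j)d_j + N−1) + (q²−1)/(1+ρ) + q satisfies L_N(d) + Ψ_N(ρ) > 0. -/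
theorem stmt_18 (N : ℕ) (hN : 3 ≤ N) (ρ : ℝ) (hρ1 : 1 / 2 < ρ) (hρ2 : ρ < 1)
    (hroot : ρ ^ (2 * N) * (2 * N * ρ + 2 * N + 1) = 1)
    (q : ℝ) (hq : q = ρ ^ N)
    (Ψ : ℝ)
    (hΨ : Ψ = 2 * ∑ m ∈ Finset.range (2 * N), (-ρ) ^ m
        - (2 * N - 3) * ρ ^ (2 * N)
        - ρ ^ (2 * N + 1) * ∑ m ∈ Finset.range (2 * N - 3), (-ρ) ^ m)
    (d : ℕ → ℝ) (hd : ∀ i, 0 ≤ d i) :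
    0 < (q ^ 2 * ((∑ j ∈ Finset.range (N - 1), ((N : ℝ) - 1 - j) * d j) + (N - 1))
        + (q ^ 2 - 1) / (1 + ρ) + q) + Ψ := by
  have hρ0 : 0 < ρ := by linarith
  have h1ρ : (0:ℝ) < 1 + ρ := by linarith
  have hne : -ρ ≠ 1 := by linarith
  set A := ρ ^ (2 * N) with hA
  set B := ρ ^ (2 * N - 3) with hB
  set S := ∑ j ∈ Finset.range (N - 1), ((N : ℝ) - 1 - j) * d j with hS
  have hS0 : 0 ≤ S := by
    apply Finset.sum_nonneg
    intro j hj
    have hj' : j ≤ N - 1 - 1 := Nat.le_sub_one_of_lt (Finset.mem_range.mp hj)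
    have : (j:ℝ) ≤ (N:ℝ) - 2 := by
      have : (j:ℝ) ≤ ((N - 2 : ℕ) : ℝ) := by exact_mod_cast (by omega : j ≤ N - 2)
      have h2 : ((N - 2 : ℕ) : ℝ) = (N:ℝ) - 2 := by
        have : (2:ℕ) ≤ N := by omega
        push_cast [Nat.cast_sub this]
        ring
      linarith [h2 ▸ this]
    exact mul_nonneg (by linarith) (hd j)
  have hA0 : 0 < A := pow_pos hρ0 _
  have hB0 : 0 < B := pow_pos hρ0 _
  have hB1 : B < 1 := pow_lt_one₀ hρ0.le hρ2 (by omega)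
  have hq2 : q ^ 2 = A := by rw [hq, hA]; ring
  have hq0 : 0 < q := hq ▸ pow_pos hρ0 _
  have hN3 : (3:ℝ) ≤ (N:ℝ) := by exact_mod_cast hN
  have hden : (-ρ - 1 : ℝ) ≠ 0 := by intro h; linarith
  have hsum1 : ∑ m ∈ Finset.range (2 * N), (-ρ) ^ m = (1 - A) / (1 + ρ) := by
    rw [geom_sum_eq hne, Even.neg_pow (even_two_mul N) ρ, ← hA,
      div_eq_div_iff hden (ne_of_gt h1ρ)]
    ring
  have hsum2 : ∑ m ∈ Finset.range (2 * N - 3), (-ρ) ^ m = (1 + B) / (1 + ρ) := by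
    rw [geom_sum_eq hne, Odd.neg_pow (⟨N - 2, by omega⟩ : Odd (2 * N - 3)) ρ, ← hB,
      div_eq_div_iff hden (ne_of_gt h1ρ)]
    ring
  have hpow : ρ ^ (2 * N + 1) = A * ρ := by rw [hA, pow_succ]
  clear_value A B S
  rw [hΨ, hsum1, hsum2, hpow, hq2]
  have key : (A * (S + ((N:ℝ) - 1)) + (A - 1) / (1 + ρ) + q +
      (2 * ((1 - A) / (1 + ρ)) - (2 * ↑N - 3) * A - A * ρ * ((1 + B) / (1 + ρ))))
      = (A * S * (1 + ρ) + A * ((N:ℝ) - 1) * (1 + ρ) + (A - 1) + q * (1 + ρ)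
        + 2 * (1 - A) - (2 * ↑N - 3) * A * (1 + ρ) - A * ρ * (1 + B)) / (1 + ρ) := by
    field_simp
    ring
  rw [key]
  clear key hΨ hsum1 hsum2 hS hd hq hpow hne hden
  apply div_pos _ h1ρ
  have hroot' : A * (2 * ↑N * ρ + 2 * ↑N + 1) = 1 := hroot
  have hbig : (10:ℝ) ≤ 2 * ↑N * ρ + 2 * ↑N + 1 := by
    nlinarith [mul_nonneg (by linarith : (0:ℝ) ≤ (N:ℝ) - 3) (by linarith : (0:ℝ) ≤ ρ - 1/2)]
  have h10 : A ≤ 1 / 10 := by nlinarith [mul_le_mul_of_nonneg_left hbig hA0.le]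
  have hP : 0 < A * (1 + ρ) := mul_pos hA0 h1ρ
  have h2NA : (N:ℝ) * (A * (1 + ρ)) = (1 - A) / 2 := by linear_combination hroot' / 2
  have e1 : ((N:ℝ) - 2) * (A * (1 + ρ)) ≤ (1 - A) / 2 := by
    have := mul_le_mul_of_nonneg_right (show (N:ℝ) - 2 ≤ (N:ℝ) by linarith) hP.le
    linarith
  have e2 : A * (1 + ρ) ≤ 2 / 10 := by
    have := mul_le_mul h10 (show 1 + ρ ≤ 2 by linarith) h1ρ.le (by norm_num)
    linarith
  have e3 : A * ρ * B ≤ 1 / 10 := by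
    have h1 : ρ * B ≤ 1 := by
      have := mul_le_mul hρ2.le hB1.le hB0.le (by norm_num : (0:ℝ) ≤ 1)
      linarith
    have h2 : A * (ρ * B) ≤ A * 1 := mul_le_mul_of_nonneg_left h1 hA0.le
    rw [mul_one] at h2
    rw [mul_assoc]
    linarith
  have e4 : 0 ≤ A * S * (1 + ρ) := mul_nonneg (mul_nonneg hA0.le hS0) h1ρ.le
  have e5 : 0 < q * (1 + ρ) := mul_pos hq0 h1ρ
  have hEeq : A * S * (1 + ρ) + A * ((N:ℝ) - 1) * (1 + ρ) + (A - 1) + q * (1 + ρ)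
      + 2 * (1 - A) - (2 * ↑N - 3) * A * (1 + ρ) - A * ρ * (1 + B)
      = A * S * (1 + ρ) - ((N:ℝ) - 2) * (A * (1 + ρ)) + 1 - A * (1 + ρ) + q * (1 + ρ)
        - A * ρ * B := by ring
  rw [hEeq]
  linarith
end
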